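/- arXiv:1512.08106 — 2 statements merged into one kernel-verified Lean document; each statement's English description precedes it below -/
import Mathlib

section
/- Path-bounding lemma: let (S, E, w) be a finite directed weighted graph with w : E → ℤ, let W be the largest absolute weight and N = W·(|S|+2). Let g ∈ ℤ and let (s₀, c₀), (s₁, c₁), …, (s_m, c_m) be an expanded path (i.e., (s_i, s_{i+1}) ∈ E and c_{i+1} = c_i + w(s_i, s_{i+1}) for all i < m) such that c_i ≥ g for every 0 ≤ i ≤ m. Then there exists an expanded path (s'₀, c'₀), (s'₁, c'₁), …, (s'_n, c'_n) with (s'₀, c'₀) = (s₀, c₀) and (s'_n, c'_n) = (s_m, c_m) such that: (i) for every 0 ≤ i ≤ n, g ≤ c'_i ≤ max{c₀, c_m, g} + N² + N³; and (ii) there is a strictly increasing injection ι : {1, …, n} → {1, …, m} with s'_i = s_{ι(i)} and c'_i ≤ c_{ι(i)} for every 1 ≤ i ≤ n. -/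
/-!
Let `T = max {c 0, c m, g}`, `N = W (|S| + 2)` and `B = W (|S| + 1) ≤ N`. If some energy exceeds
`T + N² + N³`, take the maximal excursion above `T + N²` containing it; on each side of the peak
the energy changes by more than `B³`. On the way up, the first times it passes successive levels
`W` apart give, by pigeonhole on states, `B²` disjoint cycles with gains in `[1, B]`, and
symmetrically `B²` cycles with losses in `[1, B]` on the way down. Some gain `d` and some loss `e`
each occur `B` times: deleting `e` of those rising and `d` of those falling cycles changes the
final energy by `e d - d e = 0` and lowers every intermediate energy by at most `d e ≤ N²`, which
keeps it above `T`. The path got shorter, so induction on the length finishes the proof.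
-/

section Paths

variable {S : Type} (E : S → S → Prop) (w : S → S → ℤ)

def IsExpandedPath (n : ℕ) (s : ℕ → S) (c : ℕ → ℤ) : Prop :=
  ∀ i < n, E (s i) (s (i + 1)) ∧ c (i + 1) = c i + w (s i) (s (i + 1))

/-- `C` is the set of start indices, and the cycle starting at `p ∈ C` closes at `Q p`. -/
def IsCycleFamily (s : ℕ → S) (C : Finset ℕ) (Q : ℕ → ℕ) : Prop :=
  ∀ p ∈ C, p < Q p ∧ s p = s (Q p) ∧ ∀ p' ∈ C, p < p' → Q p ≤ p'

/-- Deleting the cycles of the family lowers the energy at a surviving position `x` by this. -/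
def removedGain (c : ℕ → ℤ) (C : Finset ℕ) (Q : ℕ → ℕ) (x : ℕ) : ℤ :=
  ∑ p ∈ C, if Q p ≤ x then c (Q p) - c p else 0

def skipSegment (p q i : ℕ) : ℕ := if i ≤ p then i else i + (q - p)

lemma skipSegment_of_le {p q i : ℕ} (h : i ≤ p) : skipSegment p q i = i := if_pos h

lemma skipSegment_of_lt {p q i : ℕ} (h : p < i) : skipSegment p q i = i + (q - p) :=
  if_neg (not_le.2 h)

lemma strictMono_skipSegment (p q : ℕ) : StrictMono (skipSegment p q) := by
  intro i j hij
  unfold skipSegment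
  split_ifs <;> omega

variable {E w}

lemma IsExpandedPath.abs_sub_le {W : ℕ} (hW : ∀ x y, E x y → (w x y).natAbs ≤ W) {n : ℕ}
    {s : ℕ → S} {c : ℕ → ℤ} (h : IsExpandedPath E w n s c) {i : ℕ} (hi : i < n) :
    |c (i + 1) - c i| ≤ W := by
  obtain ⟨hE, hc⟩ := h i hi
  rw [hc, add_sub_cancel_left, Int.abs_eq_natAbs]
  exact_mod_cast hW _ _ hE

lemma IsExpandedPath.comp_skipSegment {n p q : ℕ} {s : ℕ → S} {c : ℕ → ℤ}
    (h : IsExpandedPath E w n s c) (hpq : p < q) (hqn : q < n) (hs : s p = s q) :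
    IsExpandedPath E w (n - (q - p)) (s ∘ skipSegment p q)
      (fun i => c (skipSegment p q i) - if q ≤ skipSegment p q i then c q - c p else 0) := by
  intro i hi
  simp only [Function.comp]
  rcases lt_trichotomy i p with hip | rfl | hpi
  · rw [skipSegment_of_le hip.le, skipSegment_of_le hip, if_neg (by omega), if_neg (by omega)]
    simpa using h i (by omega)
  · rw [skipSegment_of_le le_rfl, skipSegment_of_lt (Nat.lt_succ_self i), if_pos (by omega),
      if_neg (by omega), show i + 1 + (q - i) = q + 1 by omega, hs]
    obtain ⟨hE, hc⟩ := h q hqn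
    exact ⟨hE, by linarith⟩
  · rw [skipSegment_of_lt hpi, skipSegment_of_lt (by omega), if_pos (by omega), if_pos (by omega),
      show i + 1 + (q - p) = i + (q - p) + 1 by omega]
    obtain ⟨hE, hc⟩ := h (i + (q - p)) (by omega)
    exact ⟨hE, by linarith⟩

lemma removedGain_skipSegment {c c' : ℕ → ℤ} {C : Finset ℕ} {Q : ℕ → ℕ} {p q : ℕ}
    (hC : ∀ p' ∈ C, p' < Q p' ∧ Q p' ≤ p) (hc : ∀ x ≤ p, c' x = c x) (y : ℕ) :
    removedGain c' C Q y = removedGain c C Q (skipSegment p q y) := by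
  refine Finset.sum_congr rfl fun p' hp' => ?_
  obtain ⟨hlt, hle⟩ := hC p' hp'
  have hiff : Q p' ≤ y ↔ Q p' ≤ skipSegment p q y := by
    rcases le_or_gt y p with hy | hy
    · rw [skipSegment_of_le hy]
    · rw [skipSegment_of_lt hy]; omega
  rw [hc _ hle, hc _ (by omega)]
  exact if_congr hiff rfl rfl

lemma IsCycleFamily.mono {s : ℕ → S} {C C' : Finset ℕ} {Q : ℕ → ℕ} (hC : IsCycleFamily s C Q)
    (h : C' ⊆ C) : IsCycleFamily s C' Q := fun p hp =>
  (hC p (h hp)).imp id fun h' => h'.imp id fun hord p' hp' => hord p' (h hp')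

lemma IsCycleFamily.union {s : ℕ → S} {C₁ C₂ : Finset ℕ} {Q₁ Q₂ : ℕ → ℕ}
    (h₁ : IsCycleFamily s C₁ Q₁) (h₂ : IsCycleFamily s C₂ Q₂)
    (h : ∀ p ∈ C₁, ∀ p' ∈ C₂, Q₁ p ≤ p') :
    IsCycleFamily s (C₁ ∪ C₂) (C₁.piecewise Q₁ Q₂) := by
  intro p hp
  rcases Finset.mem_union.1 hp with hp | hp
  · obtain ⟨hlt, hs, hord⟩ := h₁ p hp
    rw [Finset.piecewise_eq_of_mem _ _ _ hp]
    refine ⟨hlt, hs, fun p' hp' hpp' => ?_⟩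
    rcases Finset.mem_union.1 hp' with hp' | hp'
    · exact hord p' hp' hpp'
    · exact h p hp p' hp'
  · have hp₁ : p ∉ C₁ := fun hp₁ => by have := h p hp₁ p hp; have := (h₁ p hp₁).1; omega
    obtain ⟨hlt, hs, hord⟩ := h₂ p hp
    rw [Finset.piecewise_eq_of_notMem _ _ _ hp₁]
    refine ⟨hlt, hs, fun p' hp' hpp' => ?_⟩
    rcases Finset.mem_union.1 hp' with hp' | hp'
    · have := h p' hp' p hp; have := (h₁ p' hp').1; omega
    · exact hord p' hp' hpp'

lemma IsCycleFamily.comp_skipSegment {s : ℕ → S} {C : Finset ℕ} {Q : ℕ → ℕ} {p q : ℕ}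
    (hC : IsCycleFamily s C Q) (hp : ∀ p' ∈ C, Q p' ≤ p) :
    IsCycleFamily (s ∘ skipSegment p q) C Q := by
  intro p' hp'
  obtain ⟨hlt, hs, hord⟩ := hC p' hp'
  have hQ := hp p' hp'
  refine ⟨hlt, ?_, hord⟩
  simp only [Function.comp, skipSegment_of_le hQ, skipSegment_of_le (show p' ≤ p by omega), hs]

theorem IsExpandedPath.exists_removeCycles {Q : ℕ → ℕ} (C : Finset ℕ) :
    ∀ {n : ℕ} {s : ℕ → S} {c : ℕ → ℤ}, IsExpandedPath E w n s c → IsCycleFamily s C Q →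
      (∀ p ∈ C, Q p < n) →
      ∃ n' ι, n' + C.card ≤ n ∧ ι 0 = 0 ∧ ι n' = n ∧ StrictMono ι ∧
        IsExpandedPath E w n' (s ∘ ι) (fun i => c (ι i) - removedGain c C Q (ι i)) := by
  induction C using Finset.induction_on_max with
  | empty =>
    intro n s c h _ _
    exact ⟨n, id, by simp, rfl, rfl, strictMono_id, by simpa [removedGain] using h⟩
  | insert p C hmax ih =>
    -- Deleting the last cycle first leaves the positions of the other cycles unchanged.
    intro n s c h hC hCn
    have hpC : p ∉ C := fun hp => lt_irrefl p (hmax p hp)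
    obtain ⟨hpq, hs, -⟩ := hC p (Finset.mem_insert_self p C)
    have hQp : ∀ p' ∈ C, p' < Q p' ∧ Q p' ≤ p := fun p' hp' =>
      ⟨(hC p' (Finset.mem_insert_of_mem hp')).1,
        (hC p' (Finset.mem_insert_of_mem hp')).2.2 p (Finset.mem_insert_self p C) (hmax p' hp')⟩
    have hqn := hCn p (Finset.mem_insert_self p C)
    obtain ⟨n', ι, hlen, hι0, hιn, hιmono, hpath⟩ :=
      ih (h.comp_skipSegment hpq hqn hs)
        ((hC.mono (Finset.subset_insert p C)).comp_skipSegment fun p' hp' => (hQp p' hp').2)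
        (fun p' hp' => by have := (hQp p' hp').2; omega)
    refine ⟨n', skipSegment p (Q p) ∘ ι, ?_, by simp [hι0, skipSegment_of_le], ?_,
      (strictMono_skipSegment p (Q p)).comp hιmono, ?_⟩
    · rw [Finset.card_insert_of_notMem hpC]; omega
    · rw [Function.comp, hιn, skipSegment_of_lt (by omega)]; omega
    · have hc₁ : ∀ x ≤ p, (c (skipSegment p (Q p) x) -
          if Q p ≤ skipSegment p (Q p) x then c (Q p) - c p else 0) = c x := by
        intro x hx
        rw [skipSegment_of_le hx, if_neg (by omega), sub_zero]
      convert hpath using 1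
      · rfl
      funext i
      rw [removedGain_skipSegment hQp hc₁, removedGain, removedGain, Finset.sum_insert hpC]
      simp only [Function.comp]
      ring

end Paths

section Cycles

variable {S : Type} [Fintype S] (s : ℕ → S) (c : ℕ → ℤ) {W : ℕ}

lemma exists_first_ge {a k : ℕ} (hak : a ≤ k) (hstep : ∀ i, a ≤ i → i < k → c (i + 1) ≤ c i + W)
    {L : ℤ} (haL : c a < L) (hLk : L ≤ c k) :
    ∃ i, a < i ∧ i ≤ k ∧ L ≤ c i ∧ c i < L + W ∧ ∀ j, a ≤ j → j < i → c j < L := by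
  classical
  have hex : ∃ i, a ≤ i ∧ L ≤ c i := ⟨k, hak, hLk⟩
  obtain ⟨hai, hLi⟩ := Nat.find_spec hex
  have hfirst : ∀ j, a ≤ j → j < Nat.find hex → c j < L := fun j haj hj =>
    not_le.1 fun hLj => Nat.find_min hex hj ⟨haj, hLj⟩
  have hai' : a < Nat.find hex := lt_of_le_of_ne hai fun h => by rw [← h] at hLi; omega
  have hik : Nat.find hex ≤ k := Nat.find_min' hex ⟨hak, hLk⟩
  refine ⟨Nat.find hex, hai', hik, hLi, ?_, hfirst⟩
  have hprev := hfirst (Nat.find hex - 1) (by omega) (by omega)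
  have hstep' := hstep (Nat.find hex - 1) (by omega) (by omega)
  rw [Nat.sub_add_cancel (by omega)] at hstep'
  linarith

/-- The first times the energy reaches the levels `c a + 1 + j W`, `j ≤ |S|`, have increasing
energies; two of them carry the same state. -/
lemma exists_cycle_of_rise {a k : ℕ} (hak : a ≤ k)
    (hstep : ∀ i, a ≤ i → i < k → c (i + 1) ≤ c i + W)
    (hrise : c a + Fintype.card S * W < c k) :
    ∃ p q, a < p ∧ p < q ∧ q ≤ k ∧ s p = s q ∧ c a < c p ∧ c p < c q ∧
      c q ≤ c a + (Fintype.card S + 1) * W := by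
  have hlevel : ∀ j : Fin (Fintype.card S + 1), c a + 1 + (j : ℤ) * W ≤ c k := fun j => by
    have : (j : ℤ) * W ≤ Fintype.card S * W :=
      mul_le_mul_of_nonneg_right (by exact_mod_cast Nat.lt_succ_iff.1 j.2) (by positivity)
    linarith
  choose τ haτ hτk hτlow hτhigh hτfirst using fun j : Fin (Fintype.card S + 1) =>
    exists_first_ge c hak hstep (L := c a + 1 + (j : ℤ) * W)
      (by have : (0 : ℤ) ≤ (j : ℤ) * W := by positivity
          linarith) (hlevel j)
  obtain ⟨j, j', hne, hs⟩ := Fintype.exists_ne_map_eq_of_card_lt (fun j => s (τ j)) (by simp)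
  wlog hlt : j < j' generalizing j j'
  · exact this j' j hne.symm hs.symm (lt_of_le_of_ne (not_lt.1 hlt) hne.symm)
  have hjj' : (j : ℤ) + 1 ≤ j' := by exact_mod_cast hlt
  have hj' : (j' : ℤ) ≤ Fintype.card S := by exact_mod_cast Nat.lt_succ_iff.1 j'.2
  have hW : (0 : ℤ) ≤ W := by positivity
  have hcc : c (τ j) < c (τ j') := by nlinarith [hτhigh j, hτlow j']
  have hττ : τ j < τ j' := by
    refine lt_of_le_of_ne (not_lt.1 fun h => ?_) fun h => by rw [h] at hcc; exact lt_irrefl _ hcc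
    have := hτfirst j (τ j') (haτ j').le h
    nlinarith [hτlow j']
  refine ⟨τ j, τ j', haτ j, hττ, hτk j', hs, by nlinarith [hτlow j], hcc, ?_⟩
  nlinarith [hτhigh j']

theorem exists_cycleFamily_of_rise {k : ℕ} (M : ℕ) :
    ∀ a ≤ k, (∀ i, a ≤ i → i < k → c (i + 1) ≤ c i + W) →
      c a + (M * ((Fintype.card S + 1) * W) : ℕ) < c k →
      ∃ C Q, C.card = M ∧ IsCycleFamily s C Q ∧ ∀ p ∈ C, a < p ∧ Q p ≤ k ∧
        0 < c (Q p) - c p ∧ c (Q p) - c p ≤ ((Fintype.card S + 1) * W : ℕ) := by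
  induction M with
  | zero => exact fun _ _ _ _ => ⟨∅, id, rfl, by simp [IsCycleFamily], by simp⟩
  | succ M ih =>
    intro a hak hstep hrise
    push_cast at hrise ih ⊢
    have hB : (0 : ℤ) ≤ (Fintype.card S + 1) * W := by positivity
    obtain ⟨p, q, hap, hpq, hqk, hs, hcap, hcpq, hcq⟩ :=
      exists_cycle_of_rise s c hak hstep (by nlinarith)
    obtain ⟨C, Q, hcard, hC, hCprop⟩ := ih q hqk
      (fun i hqi hik => hstep i (by omega) hik) (by nlinarith)
    have hpC : p ∉ C := fun hp => by have := (hCprop p hp).1; omega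
    have hQ : ∀ x ∈ C, Function.update Q p q x = Q x := fun x hx =>
      Function.update_of_ne (by have := (hCprop x hx).1; omega) _ _
    refine ⟨insert p C, Function.update Q p q, by rw [Finset.card_insert_of_notMem hpC, hcard],
      ?_, ?_⟩
    · intro x hx
      rcases Finset.mem_insert.1 hx with rfl | hx
      · refine ⟨by simpa using hpq, by simpa using hs, fun p' hp' hxp' => ?_⟩
        rcases Finset.mem_insert.1 hp' with rfl | hp'
        · exact absurd hxp' (lt_irrefl _)
        · simpa using (hCprop p' hp').1.le
      · obtain ⟨hlt, hsx, hord⟩ := hC x hx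
        refine ⟨by rwa [hQ x hx], by rwa [hQ x hx], fun p' hp' hxp' => ?_⟩
        rcases Finset.mem_insert.1 hp' with hp'p | hp'
        · have := (hCprop x hx).1; omega
        · rw [hQ x hx]; exact hord p' hp' hxp'
    · intro x hx
      rcases Finset.mem_insert.1 hx with rfl | hx
      · simp only [Function.update_self]
        exact ⟨hap, hqk, by linarith, by linarith⟩
      · obtain ⟨hqx, hQk, hgain⟩ := hCprop x hx
        rw [hQ x hx]
        exact ⟨by omega, hQk, hgain⟩

end Cycles

lemma Finset.exists_subset_card_eq_const_of_mul_le_card {α : Type*} (C : Finset α) (f : α → ℤ)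
    {B : ℕ} (hB : 0 < B) (hf : ∀ p ∈ C, 1 ≤ f p ∧ f p ≤ B) (hC : B * B ≤ C.card) :
    ∃ d : ℕ, 1 ≤ d ∧ d ≤ B ∧ ∀ r ≤ B, ∃ A ⊆ C, A.card = r ∧ ∀ p ∈ A, f p = d := by
  classical
  obtain ⟨d, hd, hfiber⟩ := Finset.exists_le_card_fiber_of_mul_le_card_of_maps_to
    (f := fun p => (f p).toNat) (t := Finset.Icc 1 B)
    (fun p hp => by have := hf p hp; simp only [Finset.mem_Icc]; omega)
    ⟨1, Finset.mem_Icc.2 ⟨le_rfl, hB⟩⟩ (by rwa [Nat.card_Icc, Nat.add_sub_cancel])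
  rw [Finset.mem_Icc] at hd
  refine ⟨d, hd.1, hd.2, fun r hr => ?_⟩
  obtain ⟨A, hA, hcard⟩ := Finset.exists_subset_card_eq (hr.trans hfiber)
  refine ⟨A, hA.trans (Finset.filter_subset _ _), hcard, fun p hp => ?_⟩
  obtain ⟨hpC, hfp⟩ := Finset.mem_filter.1 (hA hp)
  have := hf p hpC
  omega

section RemovedGain

variable (c : ℕ → ℤ) {Q Q₁ Q₂ : ℕ → ℕ}

lemma removedGain_eq_zero {C : Finset ℕ} {x : ℕ} (h : ∀ p ∈ C, x < Q p) :
    removedGain c C Q x = 0 :=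
  Finset.sum_eq_zero fun p hp => if_neg (not_le.2 (h p hp))

lemma removedGain_of_gain_eq {C : Finset ℕ} {γ : ℤ} (h : ∀ p ∈ C, c (Q p) - c p = γ) (x : ℕ) :
    removedGain c C Q x = (C.filter (Q · ≤ x)).card * γ := by
  rw [removedGain, ← Finset.sum_filter, Finset.sum_congr rfl fun p hp =>
    h p (Finset.mem_filter.1 hp).1, Finset.sum_const, nsmul_eq_mul]

lemma removedGain_union_piecewise {A A' : Finset ℕ} (hdisj : Disjoint A A') (x : ℕ) :
    removedGain c (A ∪ A') (A.piecewise Q₁ Q₂) x =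
      removedGain c A Q₁ x + removedGain c A' Q₂ x := by
  rw [removedGain, Finset.sum_union hdisj]
  congr 1 <;> refine Finset.sum_congr rfl fun p hp => ?_
  · rw [Finset.piecewise_eq_of_mem _ _ _ hp]
  · rw [Finset.piecewise_eq_of_notMem _ _ _ (Finset.disjoint_right.1 hdisj hp)]

variable {A A' : Finset ℕ} {d e : ℕ} (hA : ∀ p ∈ A, c (Q₁ p) - c p = d)
  (hA' : ∀ p ∈ A', c (Q₂ p) - c p = -e) (hcard : A.card = e) (hcard' : A'.card = d)
include hA hA' hcard hcard'

lemma removedGain_add_mem_Icc (hord : ∀ p ∈ A, ∀ p' ∈ A', Q₁ p ≤ Q₂ p') (x : ℕ) :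
    0 ≤ removedGain c A Q₁ x + removedGain c A' Q₂ x ∧
      removedGain c A Q₁ x + removedGain c A' Q₂ x ≤ d * e := by
  rw [removedGain_of_gain_eq c hA, removedGain_of_gain_eq c hA']
  have hα : (A.filter (Q₁ · ≤ x)).card ≤ e := hcard ▸ Finset.card_filter_le _ _
  have hβ : (A'.filter (Q₂ · ≤ x)).card ≤ d := hcard' ▸ Finset.card_filter_le _ _
  rcases Nat.eq_zero_or_pos (A'.filter (Q₂ · ≤ x)).card with h0 | hpos
  · rw [h0, Nat.cast_zero, zero_mul, add_zero]
    have : ((A.filter (Q₁ · ≤ x)).card : ℤ) ≤ e := by exact_mod_cast hα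
    exact ⟨by positivity, by nlinarith [(Nat.cast_nonneg d : (0 : ℤ) ≤ d)]⟩
  · obtain ⟨p', hp'⟩ := Finset.card_pos.1 hpos
    obtain ⟨hp'A', hp'x⟩ := Finset.mem_filter.1 hp'
    have hfull : A.filter (Q₁ · ≤ x) = A :=
      Finset.filter_true_of_mem fun p hp => (hord p hp p' hp'A').trans hp'x
    rw [hfull, hcard]
    have : ((A'.filter (Q₂ · ≤ x)).card : ℤ) ≤ d := by exact_mod_cast hβ
    constructor <;> nlinarith [(Nat.cast_nonneg e : (0 : ℤ) ≤ e),
      (Nat.cast_nonneg (A'.filter (Q₂ · ≤ x)).card : (0 : ℤ) ≤ _)]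

lemma removedGain_add_eq_zero {x : ℕ} (hx : ∀ p ∈ A, Q₁ p ≤ x) (hx' : ∀ p ∈ A', Q₂ p ≤ x) :
    removedGain c A Q₁ x + removedGain c A' Q₂ x = 0 := by
  rw [removedGain_of_gain_eq c hA, removedGain_of_gain_eq c hA', Finset.filter_true_of_mem hx,
    Finset.filter_true_of_mem hx', hcard, hcard']
  ring

end RemovedGain

lemma IsCycleFamily.balanced_union {S : Type} {s : ℕ → S} (c : ℕ → ℤ) {A A' : Finset ℕ}
    {Q₁ Q₂ : ℕ → ℕ} {d e : ℕ} (hA : IsCycleFamily s A Q₁) (hA' : IsCycleFamily s A' Q₂)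
    (hsep : ∀ p ∈ A, ∀ p' ∈ A', Q₁ p ≤ p') (hgain : ∀ p ∈ A, c (Q₁ p) - c p = d)
    (hgain' : ∀ p ∈ A', c (Q₂ p) - c p = -e) (hcard : A.card = e) (hcard' : A'.card = d) :
    IsCycleFamily s (A ∪ A') (A.piecewise Q₁ Q₂) ∧
      (∀ x, (∀ p ∈ A, Q₁ p ≤ x) → (∀ p ∈ A', Q₂ p ≤ x) →
        removedGain c (A ∪ A') (A.piecewise Q₁ Q₂) x = 0) ∧
      ∀ x, 0 ≤ removedGain c (A ∪ A') (A.piecewise Q₁ Q₂) x ∧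
        removedGain c (A ∪ A') (A.piecewise Q₁ Q₂) x ≤ d * e := by
  have hdisj : Disjoint A A' := Finset.disjoint_left.2 fun p hp hp' => by
    have := hsep p hp p hp'; have := (hA p hp).1; omega
  have hord : ∀ p ∈ A, ∀ p' ∈ A', Q₁ p ≤ Q₂ p' := fun p hp p' hp' =>
    (hsep p hp p' hp').trans (hA' p' hp').1.le
  refine ⟨hA.union hA' hsep, fun x hx hx' => ?_, fun x => ?_⟩
  · rw [removedGain_union_piecewise c hdisj]
    exact removedGain_add_eq_zero c hgain hgain' hcard hcard' hx hx'
  · rw [removedGain_union_piecewise c hdisj]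
    exact removedGain_add_mem_Icc c hgain hgain' hcard hcard' hord x

theorem exists_balanced_cycleFamily {S : Type} [Fintype S] (s : ℕ → S) (c : ℕ → ℤ) {W a k b : ℕ}
    (hak : a ≤ k) (hkb : k ≤ b) (hstep : ∀ i, a ≤ i → i < b → |c (i + 1) - c i| ≤ W)
    (hup : c a + (((Fintype.card S + 1) * W) ^ 3 : ℕ) < c k)
    (hdown : c b + (((Fintype.card S + 1) * W) ^ 3 : ℕ) < c k) :
    ∃ C Q, C.Nonempty ∧ IsCycleFamily s C Q ∧ (∀ p ∈ C, a < p ∧ Q p ≤ b) ∧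
      (∀ x, b ≤ x → removedGain c C Q x = 0) ∧
      ∀ x, 0 ≤ removedGain c C Q x ∧
        removedGain c C Q x ≤ (((Fintype.card S + 1) * W) ^ 2 : ℕ) := by
  set B := (Fintype.card S + 1) * W
  have hcube : ((B * B * B : ℕ) : ℤ) = (B ^ 3 : ℕ) := by push_cast; ring
  have hstepUp : ∀ i, a ≤ i → i < k → c (i + 1) ≤ c i + W := fun i hai hik =>
    by linarith [(abs_le.1 (hstep i hai (by omega))).2]
  have hstepDown : ∀ i, k ≤ i → i < b → -c (i + 1) ≤ -c i + W := fun i hki hib =>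
    by linarith [(abs_le.1 (hstep i (by omega) hib)).1]
  have hB : 0 < B := by
    rcases Nat.eq_zero_or_pos W with hW | hW
    · -- With `W = 0` a rising cycle would have gain `0`.
      subst hW
      obtain ⟨p, q, -, -, -, -, hap, hpq, hq⟩ :=
        exists_cycle_of_rise s c hak hstepUp (by simpa [B] using hup)
      simp only [Nat.cast_zero, mul_zero, add_zero] at hq
      linarith
    · positivity
  obtain ⟨C₁, Q₁, hcard₁, hC₁, hprop₁⟩ :=
    exists_cycleFamily_of_rise s c (B * B) a hak hstepUp (by rwa [hcube])
  obtain ⟨C₂, Q₂, hcard₂, hC₂, hprop₂⟩ :=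
    exists_cycleFamily_of_rise s (fun i => -c i) (B * B) k hkb hstepDown
      (by rw [hcube]; linarith)
  obtain ⟨d, hd, hdB, hsel₁⟩ := C₁.exists_subset_card_eq_const_of_mul_le_card
    (fun p => c (Q₁ p) - c p) hB (fun p hp => (hprop₁ p hp).2.2) hcard₁.ge
  obtain ⟨e, -, heB, hsel₂⟩ := C₂.exists_subset_card_eq_const_of_mul_le_card
    (fun p => -c (Q₂ p) - -c p) hB (fun p hp => (hprop₂ p hp).2.2) hcard₂.ge
  obtain ⟨A, hAC, hAcard, hAgain⟩ := hsel₁ e heB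
  obtain ⟨A', hA'C, hA'card, hA'gain⟩ := hsel₂ d hdB
  replace hA'gain : ∀ p ∈ A', c (Q₂ p) - c p = -e := fun p hp => by linarith [hA'gain p hp]
  have hsep : ∀ p ∈ A, ∀ p' ∈ A', Q₁ p ≤ p' := fun p hp p' hp' =>
    (hprop₁ p (hAC hp)).2.1.trans (hprop₂ p' (hA'C hp')).1.le
  obtain ⟨hfam, hzero, hbound⟩ :=
    (hC₁.mono hAC).balanced_union c (hC₂.mono hA'C) hsep hAgain hA'gain hAcard hA'card
  refine ⟨A ∪ A', A.piecewise Q₁ Q₂, ?_, hfam, fun p hp => ?_,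
    fun x hx => hzero x (fun p hp => ((hprop₁ p (hAC hp)).2.1.trans hkb).trans hx)
      (fun p hp => (hprop₂ p (hA'C hp)).2.1.trans hx), fun x => ?_⟩
  · exact (Finset.card_pos.1 (by omega)).mono Finset.subset_union_right
  · by_cases hpA : p ∈ A
    · rw [Finset.piecewise_eq_of_mem _ _ _ hpA]
      exact ⟨(hprop₁ p (hAC hpA)).1, (hprop₁ p (hAC hpA)).2.1.trans hkb⟩
    · have hpA' := (Finset.mem_union.1 hp).resolve_left hpA
      rw [Finset.piecewise_eq_of_notMem _ _ _ hpA]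
      exact ⟨hak.trans_lt (hprop₂ p (hA'C hpA')).1, (hprop₂ p (hA'C hpA')).2.1⟩
  · refine ⟨(hbound x).1, (hbound x).2.trans ?_⟩
    push_cast
    nlinarith [(Nat.cast_le (α := ℤ)).2 hdB, (Nat.cast_le (α := ℤ)).2 heB,
      (Nat.cast_nonneg d : (0 : ℤ) ≤ d)]

lemma exists_excursion (c : ℕ → ℤ) {L : ℤ} {m k : ℕ} (hk : k ≤ m) (h0 : c 0 ≤ L) (hm : c m ≤ L)
    (hck : L < c k) :
    ∃ a b, a < k ∧ k < b ∧ b ≤ m ∧ c a ≤ L ∧ c b ≤ L ∧ ∀ x, a < x → x < b → L < c x := by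
  classical
  have ha : c (Nat.findGreatest (c · ≤ L) k) ≤ L :=
    Nat.findGreatest_spec (P := (c · ≤ L)) (Nat.zero_le k) h0
  have hafter : ∀ x, Nat.findGreatest (c · ≤ L) k < x → x ≤ k → L < c x := fun x h1 h2 =>
    not_le.1 (Nat.findGreatest_is_greatest h1 h2)
  have hex : ∃ b, k ≤ b ∧ c b ≤ L := ⟨m, hk, hm⟩
  obtain ⟨hkb, hb⟩ := Nat.find_spec hex
  have hbefore : ∀ x, k ≤ x → x < Nat.find hex → L < c x := fun x h1 h2 =>
    not_le.1 fun h => Nat.find_min hex h2 ⟨h1, h⟩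
  refine ⟨Nat.findGreatest (c · ≤ L) k, Nat.find hex,
    lt_of_le_of_ne (Nat.findGreatest_le k) fun h => by rw [h] at ha; omega,
    lt_of_le_of_ne hkb fun h => by rw [← h] at hb; omega,
    Nat.find_min' hex ⟨hk, hm⟩, ha, hb, fun x h1 h2 => ?_⟩
  rcases le_or_gt x k with hxk | hxk
  · exact hafter x h1 hxk
  · exact hbefore x hxk.le h2

section Subpath

variable {S : Type}

def IsSubpathBelow (n : ℕ) (s' : ℕ → S) (c' : ℕ → ℤ) (m : ℕ) (s : ℕ → S) (c : ℕ → ℤ) : Prop :=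
  ∃ ι : ℕ → ℕ, ι 0 = 0 ∧ StrictMonoOn ι (Set.Iic n) ∧
    ∀ i ≤ n, ι i ≤ m ∧ s' i = s (ι i) ∧ c' i ≤ c (ι i)

lemma IsSubpathBelow.refl (n : ℕ) (s : ℕ → S) (c : ℕ → ℤ) : IsSubpathBelow n s c n s c :=
  ⟨id, rfl, strictMono_id.strictMonoOn _, fun _ hi => ⟨hi, rfl, le_rfl⟩⟩

lemma IsSubpathBelow.trans {n₁ n₂ n₃ : ℕ} {s₁ s₂ s₃ : ℕ → S} {c₁ c₂ c₃ : ℕ → ℤ}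
    (h₁₂ : IsSubpathBelow n₁ s₁ c₁ n₂ s₂ c₂) (h₂₃ : IsSubpathBelow n₂ s₂ c₂ n₃ s₃ c₃) :
    IsSubpathBelow n₁ s₁ c₁ n₃ s₃ c₃ := by
  obtain ⟨ι, hι0, hιmono, hι⟩ := h₁₂
  obtain ⟨κ, hκ0, hκmono, hκ⟩ := h₂₃
  refine ⟨κ ∘ ι, by simp [hι0, hκ0], hκmono.comp hιmono fun i hi => (hι i hi).1,
    fun i hi => ?_⟩
  obtain ⟨hιi, hs₁, hc₁⟩ := hι i hi
  obtain ⟨hκi, hs₂, hc₂⟩ := hκ (ι i) hιi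
  exact ⟨hκi, hs₁.trans hs₂, hc₁.trans hc₂⟩

end Subpath

section Bounding

variable {S : Type} [Fintype S] {E : S → S → Prop} {w : S → S → ℤ} {W : ℕ}

theorem IsExpandedPath.exists_removable_cycleFamily (hW : ∀ x y, E x y → (w x y).natAbs ≤ W)
    {g : ℤ} {m k : ℕ} {s : ℕ → S} {c : ℕ → ℤ} (hpath : IsExpandedPath E w m s c)
    (hlow : ∀ i ≤ m, g ≤ c i) (hk : k ≤ m)
    (hbig : max (max (c 0) (c m)) g + ((W * (Fintype.card S + 2) : ℕ) : ℤ) ^ 2 +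
      ((W * (Fintype.card S + 2) : ℕ) : ℤ) ^ 3 < c k) :
    ∃ C Q, C.Nonempty ∧ IsCycleFamily s C Q ∧ (∀ p ∈ C, Q p < m) ∧
      removedGain c C Q 0 = 0 ∧ removedGain c C Q m = 0 ∧
      ∀ x ≤ m, 0 ≤ removedGain c C Q x ∧ g ≤ c x - removedGain c C Q x := by
  set T := max (max (c 0) (c m)) g
  set B := (Fintype.card S + 1) * W
  have hN : ((W * (Fintype.card S + 2) : ℕ) : ℤ) = B + W := by push_cast [B]; ring
  rw [hN] at hbig
  have hB : (0 : ℤ) ≤ B := by positivity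
  have hW0 : (0 : ℤ) ≤ W := by positivity
  have hsq : (B : ℤ) ^ 2 ≤ (B + W) ^ 2 := pow_le_pow_left₀ hB (by linarith) 2
  have hcube : (B : ℤ) ^ 3 + W ≤ (B + W) ^ 3 := by
    have : (W : ℤ) ≤ W ^ 3 := by exact_mod_cast Nat.le_self_pow (by norm_num) W
    linarith [pow_add_pow_le hB hW0 (by norm_num : 3 ≠ 0)]
  obtain ⟨a, b, hak, hkb, hbm, hca, hcb, hexc⟩ := exists_excursion c (L := T + (B + W) ^ 2) hk
    (by have := le_max_left (max (c 0) (c m)) g; have := le_max_left (c 0) (c m); nlinarith)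
    (by have := le_max_left (max (c 0) (c m)) g; have := le_max_right (c 0) (c m); nlinarith)
    (by nlinarith)
  have hcb' : c (b - 1) ≤ c b + W := by
    have := abs_le.1 (hpath.abs_sub_le hW (show b - 1 < m by omega))
    rw [Nat.sub_add_cancel (by omega)] at this
    linarith
  obtain ⟨C, Q, hCne, hC, hCab, hDb, hD⟩ := exists_balanced_cycleFamily s c hak.le
    (Nat.le_sub_one_of_lt hkb) (fun i _ hi => hpath.abs_sub_le hW (by omega))
    (by rw [Nat.cast_pow]; nlinarith) (by rw [Nat.cast_pow]; nlinarith)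
  have hDa : ∀ x ≤ a, removedGain c C Q x = 0 := fun x hx =>
    removedGain_eq_zero c fun p hp => by have := (hCab p hp).1; have := (hC p hp).1; omega
  refine ⟨C, Q, hCne, hC, fun p hp => by have := (hCab p hp).2; omega, hDa 0 (Nat.zero_le a),
    hDb m (by omega), fun x hx => ⟨(hD x).1, ?_⟩⟩
  rcases le_or_gt x a with hxa | hax
  · rw [hDa x hxa, sub_zero]; exact hlow x hx
  rcases le_or_gt b x with hbx | hxb
  · rw [hDb x (by omega), sub_zero]; exact hlow x hx
  have := hexc x hax hxb
  have := (hD x).2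
  have := le_max_right (max (c 0) (c m)) g
  rw [Nat.cast_pow] at *
  linarith

theorem IsExpandedPath.exists_shorter (hW : ∀ x y, E x y → (w x y).natAbs ≤ W)
    {g : ℤ} {m k : ℕ} {s : ℕ → S} {c : ℕ → ℤ} (hpath : IsExpandedPath E w m s c)
    (hlow : ∀ i ≤ m, g ≤ c i) (hk : k ≤ m)
    (hbig : max (max (c 0) (c m)) g + ((W * (Fintype.card S + 2) : ℕ) : ℤ) ^ 2 +
      ((W * (Fintype.card S + 2) : ℕ) : ℤ) ^ 3 < c k) :
    ∃ n s' c', n < m ∧ s' 0 = s 0 ∧ c' 0 = c 0 ∧ s' n = s m ∧ c' n = c m ∧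
      IsExpandedPath E w n s' c' ∧ (∀ i ≤ n, g ≤ c' i) ∧ IsSubpathBelow n s' c' m s c := by
  obtain ⟨C, Q, hCne, hC, hCm, hD0, hDm, hD⟩ :=
    hpath.exists_removable_cycleFamily hW hlow hk hbig
  obtain ⟨n, ι, hlen, hι0, hιn, hιmono, hpath'⟩ := hpath.exists_removeCycles C hC hCm
  have hιm : ∀ i ≤ n, ι i ≤ m := fun i hi => hιn ▸ hιmono.monotone hi
  refine ⟨n, s ∘ ι, fun i => c (ι i) - removedGain c C Q (ι i), ?_, by simp [hι0],
    by simp only [hι0, hD0, sub_zero], by simp [hιn], by simp only [hιn, hDm, sub_zero], hpath',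
    fun i hi => (hD (ι i) (hιm i hi)).2, ι, hι0, hιmono.strictMonoOn _,
    fun i hi => ⟨hιm i hi, rfl, by linarith [(hD (ι i) (hιm i hi)).1]⟩⟩
  have := hCne.card_pos
  omega

theorem exists_bounded_path (hW : ∀ x y, E x y → (w x y).natAbs ≤ W) (g : ℤ) (m : ℕ) :
    ∀ (s : ℕ → S) (c : ℕ → ℤ), IsExpandedPath E w m s c → (∀ i ≤ m, g ≤ c i) →
    ∃ n s' c', s' 0 = s 0 ∧ c' 0 = c 0 ∧ s' n = s m ∧ c' n = c m ∧
      IsExpandedPath E w n s' c' ∧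
      (∀ i ≤ n, g ≤ c' i ∧ c' i ≤ max (max (c 0) (c m)) g +
        ((W * (Fintype.card S + 2) : ℕ) : ℤ) ^ 2 + ((W * (Fintype.card S + 2) : ℕ) : ℤ) ^ 3) ∧
      IsSubpathBelow n s' c' m s c := by
  induction m using Nat.strong_induction_on with
  | _ m ih =>
    intro s c hpath hlow
    by_cases hsmall : ∀ i ≤ m, c i ≤ max (max (c 0) (c m)) g +
        ((W * (Fintype.card S + 2) : ℕ) : ℤ) ^ 2 + ((W * (Fintype.card S + 2) : ℕ) : ℤ) ^ 3
    · exact ⟨m, s, c, rfl, rfl, rfl, rfl, hpath, fun i hi => ⟨hlow i hi, hsmall i hi⟩,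
        IsSubpathBelow.refl m s c⟩
    push Not at hsmall
    obtain ⟨k, hk, hbig⟩ := hsmall
    obtain ⟨n, s', c', hnm, hs0, hc0, hsn, hcn, hpath', hlow', hsub⟩ :=
      hpath.exists_shorter hW hlow hk hbig
    obtain ⟨n'', s'', c'', hs0', hc0', hsn', hcn', hpath'', hbound, hsub'⟩ :=
      ih n hnm s' c' hpath' hlow'
    rw [hc0, hcn] at hbound
    exact ⟨n'', s'', c'', hs0'.trans hs0, hc0'.trans hc0, hsn'.trans hsn, hcn'.trans hcn,
      hpath'', hbound, hsub'.trans hsub⟩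

end Bounding

/-- Path-bounding lemma: in a finite directed weighted graph with edge weights of absolute
value at most `W`, any expanded path `(s 0, c 0), …, (s m, c m)` whose energies all stay above
`g` can be replaced by an expanded path with the same endpoints whose energies stay in
`[g, max {c 0, c m, g} + N² + N³]` with `N = W·(|S| + 2)`, and whose intermediate
configurations inject, in an increasing way and with no larger energies, into those of the
original path. -/
theorem path_bounding {S : Type} [Fintype S] (E : S → S → Prop) (w : S → S → ℤ)
    (W : ℕ) (hW : ∀ s s', E s s' → (w s s').natAbs ≤ W)
    (g : ℤ) (m : ℕ) (s : ℕ → S) (c : ℕ → ℤ)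
    (hpath : ∀ i < m, E (s i) (s (i + 1)) ∧ c (i + 1) = c i + w (s i) (s (i + 1)))
    (hlow : ∀ i ≤ m, g ≤ c i) :
    ∃ (n : ℕ) (s' : ℕ → S) (c' : ℕ → ℤ),
      s' 0 = s 0 ∧ c' 0 = c 0 ∧ s' n = s m ∧ c' n = c m ∧
      (∀ i < n, E (s' i) (s' (i + 1)) ∧ c' (i + 1) = c' i + w (s' i) (s' (i + 1))) ∧
      (∀ i ≤ n, g ≤ c' i ∧
        c' i ≤ max (max (c 0) (c m)) g +
          ((W * (Fintype.card S + 2) : ℕ) : ℤ) ^ 2 +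
          ((W * (Fintype.card S + 2) : ℕ) : ℤ) ^ 3) ∧
      (∃ ι : ℕ → ℕ, StrictMonoOn ι (Set.Icc 1 n) ∧
        ∀ i, 1 ≤ i → i ≤ n → 1 ≤ ι i ∧ ι i ≤ m ∧ s' i = s (ι i) ∧ c' i ≤ c (ι i)) := by
  obtain ⟨n, s', c', hs0, hc0, hsn, hcn, hpath', hbound, ι, hι0, hιmono, hι⟩ :=
    exists_bounded_path hW g m s c hpath hlow
  refine ⟨n, s', c', hs0, hc0, hsn, hcn, hpath', hbound, ι,
    hιmono.mono fun i hi => hi.2, fun i hi1 hin => ⟨?_, hι i hin⟩⟩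
  have := hιmono (Set.mem_Iic.2 (Nat.zero_le n)) (Set.mem_Iic.2 hin) hi1
  omega
end

section
/- Pseudo-polynomial memory lower bound for player 1 in bounded-energy games: for every U ∈ ℕ with U ≥ 1, consider the one-player game G_U with states {s, s'} (both of player 1) and edges s → s of weight −U, s → s' of weight 1, and s' → s of weight 0. Then: (i) a play π from s satisfies 0 ≤ EL(π(n)) ≤ U for all n if and only if π is the periodic play of period 2U+1 that alternates s → s' → s exactly U times and then takes the self-loop s → s once, repeating this forever; and (ii) every strategy of player 1 induced by a Moore machine (M, m₀, α_u : M × S → M, α_n : M × S₁ → S) that is winning from s for LU(U, 0) satisfies |M| ≥ U + 1. -/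
open Filter

noncomputable section

/-- A two-player turn-based game on a (finite) state space `S`: `p1 s` holds iff state `s`
belongs to player 1 (otherwise it belongs to player 2), `E` is the edge relation (every state
has a successor), and `w` assigns an integer weight to every edge. -/
structure Game (S : Type) where
  p1 : S → Prop
  E : S → S → Prop
  w : S → S → ℤ
  succ : ∀ s, ∃ t, E s t

variable {S : Type}

/-- `π` is a play of `G` starting from `s₀`. -/
def IsPlay (G : Game S) (s₀ : S) (π : ℕ → S) : Prop :=
  π 0 = s₀ ∧ ∀ n, G.E (π n) (π (n + 1))

/-- Energy level of the play `π` at position `n`. -/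
def ELp (G : Game S) (π : ℕ → S) (n : ℕ) : ℤ :=
  ∑ i ∈ Finset.range n, G.w (π i) (π (i + 1))

/-- Average-energy of a play (limsup variant), in the extended reals. -/
def AEsupP (G : Game S) (π : ℕ → S) : EReal :=
  limsup (fun n : ℕ => (((∑ i ∈ Finset.range n, (ELp G π (i + 1) : ℝ)) / n : ℝ) : EReal)) atTop

/-- Average-energy of a play (liminf variant). -/
def AEinfP (G : Game S) (π : ℕ → S) : EReal :=
  liminf (fun n : ℕ => (((∑ i ∈ Finset.range n, (ELp G π (i + 1) : ℝ)) / n : ℝ) : EReal)) atTop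

/-- Mean-payoff of a play (limsup variant). -/
def MPsupP (G : Game S) (π : ℕ → S) : EReal :=
  limsup (fun n : ℕ => (((ELp G π n : ℝ) / n : ℝ) : EReal)) atTop

/-- Total-payoff of a play (limsup variant). -/
def TPsupP (G : Game S) (π : ℕ → S) : EReal :=
  limsup (fun n : ℕ => ((ELp G π n : ℝ) : EReal)) atTop

/-- The history (finite prefix) `π 0, …, π n` of a play, as a list. -/
def hist (π : ℕ → S) (n : ℕ) : List S := List.ofFn (fun i : Fin (n + 1) => π i)

/-- A (deterministic) strategy for player 1: on every nonempty finite path of `G` ending in a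
player-1 state, it prescribes an `E`-successor of the last state. -/
def IsStrat1 (G : Game S) (σ : List S → S) : Prop :=
  ∀ (ρ : List S) (h : ρ ≠ []), List.Chain' G.E ρ → G.p1 (ρ.getLast h) →
    G.E (ρ.getLast h) (σ ρ)

/-- A strategy for player 2 (who owns the states where `p1` fails). -/
def IsStrat2 (G : Game S) (σ : List S → S) : Prop :=
  ∀ (ρ : List S) (h : ρ ≠ []), List.Chain' G.E ρ → ¬ G.p1 (ρ.getLast h) →
    G.E (ρ.getLast h) (σ ρ)

/-- A strategy is memoryless if its choice only depends on the last state of the history. -/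
def Memoryless (σ : List S → S) : Prop :=
  ∀ (ρ ρ' : List S) (h : ρ ≠ []) (h' : ρ' ≠ []),
    ρ.getLast h = ρ'.getLast h' → σ ρ = σ ρ'

/-- The play `π` is consistent with the player-1 strategy `σ`. -/
def Consistent1 (G : Game S) (σ : List S → S) (π : ℕ → S) : Prop :=
  ∀ n, G.p1 (π n) → π (n + 1) = σ (hist π n)

/-- The play `π` is consistent with the player-2 strategy `σ`. -/
def Consistent2 (G : Game S) (σ : List S → S) (π : ℕ → S) : Prop :=
  ∀ n, ¬ G.p1 (π n) → π (n + 1) = σ (hist π n)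

/-- `σ` is a winning strategy for player 1 from `s₀` for the objective `Obj`:
every consistent play from `s₀` belongs to `Obj`. -/
def Winning1 (G : Game S) (s₀ : S) (σ : List S → S) (Obj : (ℕ → S) → Prop) : Prop :=
  IsStrat1 G σ ∧ ∀ π, IsPlay G s₀ π → Consistent1 G σ π → Obj π

/-- `σ` is a winning strategy for player 2 from `s₀` against the objective `Obj`:
every consistent play from `s₀` lies outside `Obj`. -/
def Winning2 (G : Game S) (s₀ : S) (σ : List S → S) (Obj : (ℕ → S) → Prop) : Prop :=
  IsStrat2 G σ ∧ ∀ π, IsPlay G s₀ π → Consistent2 G σ π → ¬ Obj π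

/-- Average-energy objective: the average-energy of the play is at most `t`. -/
def AvgEnergyLevel (G : Game S) (t : ℚ) : (ℕ → S) → Prop :=
  fun π => AEsupP G π ≤ ((t : ℝ) : EReal)

/-- Mean-payoff objective: the mean-payoff of the play is at most `t`. -/
def MeanPayOff (G : Game S) (t : ℚ) : (ℕ → S) → Prop :=
  fun π => MPsupP G π ≤ ((t : ℝ) : EReal)

/-- Total-payoff objective: the total-payoff of the play is at most `t`. -/
def TotalPayOff (G : Game S) (t : ℤ) : (ℕ → S) → Prop :=
  fun π => TPsupP G π ≤ ((t : ℝ) : EReal)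

/-- Lower-bounded energy objective with initial credit `c₀`. -/
def LowerObj (G : Game S) (c₀ : ℕ) : (ℕ → S) → Prop :=
  fun π => ∀ n, 0 ≤ (c₀ : ℤ) + ELp G π n

/-- Lower- and upper-bounded energy objective with upper bound `U` and initial credit `c₀`. -/
def LUObj (G : Game S) (U c₀ : ℕ) : (ℕ → S) → Prop :=
  fun π => ∀ n, 0 ≤ (c₀ : ℤ) + ELp G π n ∧ (c₀ : ℤ) + ELp G π n ≤ (U : ℤ)

/-- The one-player game `G_U`: state `true` is `s`, state `false` is `s'`; edges are
`s → s` of weight `-U`, `s → s'` of weight `1`, and `s' → s` of weight `0`. -/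
def gU (U : ℕ) : Game Bool where
  p1 := fun _ => True
  E := fun x y => match x, y with
    | true, _ => True
    | false, true => True
    | false, false => False
  w := fun x y => match x, y with
    | true, true => -(U : ℤ)
    | true, false => 1
    | false, _ => 0
  succ := fun s => ⟨true, by cases s <;> trivial⟩

/-- The periodic play of period `2U+1` from `s`: it alternates `s → s' → s` exactly `U` times
and then takes the self-loop `s → s` once, repeating this forever. -/
def targetPlay (U : ℕ) : ℕ → Bool := fun k => decide ((k % (2 * U + 1)) % 2 = 0)

/-- The strategy induced by a Moore machine `(M, m₀, αu, αn)`: on a history `ρ · s` it plays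
`αn (α̂u m₀ ρ) s`, where `α̂u` is the iterated update function. -/
def mooreStrat {M : Type} (m₀ : M) (αu : M → Bool → M) (αn : M → Bool → Bool) :
    List Bool → Bool :=
  fun ρ => match ρ.getLast? with
    | none => true
    | some s => αn (ρ.dropLast.foldl αu m₀) s

/-! In `G_U` every state has at most one successor keeping the energy in `[0, U]`: from `s`
the self-loop at level `U` and the edge to `s'` below it. So the play keeping the energy in
`[0, U]` is unique, and `targetPlay U` is one. A winning Moore strategy must produce it; it visits
`s` at positions `0, 2, …, 2U`, with energies `0, 1, …, U`. If the memory agreed at two of these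
visits, the machine would repeat itself with some shift `2d`, `1 ≤ d ≤ U`, but the play is at `s`
at position `2U` and at `s'` at position `2U + 2d`. -/

section Plays

variable {G : Game S}

theorem ELp_succ (π : ℕ → S) (n : ℕ) :
    ELp G π (n + 1) = ELp G π n + G.w (π n) (π (n + 1)) :=
  Finset.sum_range_succ _ _

theorem hist_eq_ofFn_append (π : ℕ → S) (n : ℕ) :
    hist π n = List.ofFn (fun i : Fin n => π i) ++ [π n] := by
  rw [hist, List.ofFn_succ', List.concat_eq_append]
  rfl

theorem hist_ne_nil (π : ℕ → S) (n : ℕ) : hist π n ≠ [] := by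
  simp [hist]

theorem getLast_hist (π : ℕ → S) (n : ℕ) : (hist π n).getLast (hist_ne_nil π n) = π n := by
  simp only [hist, List.getLast_ofFn]
  rfl

theorem isChain_hist {π : ℕ → S} {n : ℕ} (h : ∀ i < n, G.E (π i) (π (i + 1))) :
    (hist π n).IsChain G.E :=
  List.isChain_ofFn.2 fun i hi => h i (by omega)

theorem isPlay_of_succ_eq_strat {σ : List S → S} {π : ℕ → S} {s₀ : S} (hσ : IsStrat1 G σ)
    (hp1 : ∀ n, G.p1 (π n)) (h0 : π 0 = s₀) (hsucc : ∀ n, π (n + 1) = σ (hist π n)) :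
    IsPlay G s₀ π := by
  refine ⟨h0, fun n => ?_⟩
  induction n using Nat.strong_induction_on with
  | _ n ih =>
    have := hσ (hist π n) (hist_ne_nil π n) (isChain_hist ih)
      (by rw [getLast_hist]; exact hp1 n)
    rwa [getLast_hist, ← hsucc] at this

theorem eq_of_isPlay_of_energy_bounded {U : ℤ}
    (huniq : ∀ x y y' (c : ℤ), G.E x y → G.E x y' →
      0 ≤ c + G.w x y ∧ c + G.w x y ≤ U → 0 ≤ c + G.w x y' ∧ c + G.w x y' ≤ U → y = y')
    {s₀ : S} {π π' : ℕ → S} (hπ : IsPlay G s₀ π) (hπ' : IsPlay G s₀ π')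
    (hb : ∀ n, 0 ≤ ELp G π n ∧ ELp G π n ≤ U) (hb' : ∀ n, 0 ≤ ELp G π' n ∧ ELp G π' n ≤ U) :
    π = π' := by
  suffices h : ∀ n, π n = π' n ∧ ELp G π n = ELp G π' n from funext fun n => (h n).1
  intro n
  induction n with
  | zero => exact ⟨hπ.1.trans hπ'.1.symm, rfl⟩
  | succ n ih =>
    obtain ⟨hs, he⟩ := ih
    have hb₁ := hb (n + 1)
    have hb₁' := hb' (n + 1)
    rw [ELp_succ] at hb₁ hb₁'
    rw [he, hs] at hb₁
    have hstep : π (n + 1) = π' (n + 1) :=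
      huniq _ _ _ _ (hs ▸ hπ.2 n) (hπ'.2 n) hb₁ hb₁'
    refine ⟨hstep, ?_⟩
    rw [ELp_succ, ELp_succ, he, hs, hstep]

end Plays

theorem gU_safe_succ_unique (U : ℕ) (x y y' : Bool) (c : ℤ) (hy : (gU U).E x y)
    (hy' : (gU U).E x y')
    (hb : 0 ≤ c + (gU U).w x y ∧ c + (gU U).w x y ≤ U)
    (hb' : 0 ≤ c + (gU U).w x y' ∧ c + (gU U).w x y' ≤ U) : y = y' := by
  cases x <;> cases y <;> cases y' <;> simp_all [gU] <;> omega

theorem add_one_mod_eq_ite (n p : ℕ) :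
    (n + 1) % p = if n % p + 1 = p then 0 else n % p + 1 := by
  rcases Nat.eq_zero_or_pos p with rfl | hp
  · simp
  rw [← Nat.mod_add_mod]
  split_ifs with h
  · rw [h, Nat.mod_self]
  · exact Nat.mod_eq_of_lt (by have := Nat.mod_lt n hp; omega)

theorem ELp_targetPlay (U n : ℕ) :
    ELp (gU U) (targetPlay U) n = ((n % (2 * U + 1) + 1) / 2 : ℕ) := by
  induction n with
  | zero => simp [ELp]
  | succ n ih =>
    have hr := Nat.mod_lt n (show 2 * U + 1 > 0 by omega)
    rw [ELp_succ, ih]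
    simp only [targetPlay, add_one_mod_eq_ite n (2 * U + 1)]
    generalize n % (2 * U + 1) = r at *
    split_ifs with h
    · by_cases h2 : r % 2 = 0 <;> simp [gU, h2] <;> omega
    · by_cases h2 : r % 2 = 0 <;> by_cases h3 : (r + 1) % 2 = 0 <;> simp [gU, h2, h3] <;> omega

theorem isPlay_targetPlay (U : ℕ) : IsPlay (gU U) true (targetPlay U) := by
  refine ⟨by simp [targetPlay], fun n => ?_⟩
  simp only [targetPlay, add_one_mod_eq_ite n (2 * U + 1)]
  generalize n % (2 * U + 1) = r
  split_ifs with h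
  · cases decide (r % 2 = 0) <;> trivial
  · rcases Nat.mod_two_eq_zero_or_one r with h2 | h2
    · simp [gU, h2]
    · simp [gU, h2, show (r + 1) % 2 = 0 by omega]

theorem ELp_targetPlay_mem (U n : ℕ) :
    0 ≤ ELp (gU U) (targetPlay U) n ∧ ELp (gU U) (targetPlay U) n ≤ U := by
  have := Nat.mod_lt n (show 2 * U + 1 > 0 by omega)
  rw [ELp_targetPlay]
  omega

theorem gU_energy_bounded_iff (U : ℕ) {π : ℕ → Bool} (hπ : IsPlay (gU U) true π) :
    (∀ n, 0 ≤ ELp (gU U) π n ∧ ELp (gU U) π n ≤ (U : ℤ)) ↔ π = targetPlay U := by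
  refine ⟨fun hb => ?_, fun h => h ▸ ELp_targetPlay_mem U⟩
  exact eq_of_isPlay_of_energy_bounded (gU_safe_succ_unique U) hπ (isPlay_targetPlay U) hb
    (ELp_targetPlay_mem U)

theorem targetPlay_two_mul {U i : ℕ} (hi : i ≤ U) : targetPlay U (2 * i) = true := by
  simp [targetPlay, Nat.mod_eq_of_lt (show 2 * i < 2 * U + 1 by omega)]

theorem targetPlay_two_mul_add_two_mul {U d : ℕ} (hd : 0 < d) (hdU : d ≤ U) :
    targetPlay U (2 * U + 2 * d) = false := by
  have : (2 * U + 2 * d) % (2 * U + 1) = 2 * d - 1 := by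
    rw [Nat.mod_eq_sub_mod (by omega), Nat.mod_eq_of_lt (by omega)]
    omega
  simp only [targetPlay, this, decide_eq_false_iff_not]
  omega

section Moore

variable {M : Type} (m₀ : M) (αu : M → Bool → M) (αn : M → Bool → Bool)

/-- In a pair `(m, s)`, `m` is the memory after reading the history strictly before the
current state `s`, as in `mooreStrat`. -/
def mooreStep (q : M × Bool) : M × Bool := (αu q.1 q.2, αn q.1 q.2)

theorem foldl_ofFn_iterate_mooreStep (n : ℕ) :
    (List.ofFn fun i : Fin n => ((mooreStep αu αn)^[i] (m₀, true)).2).foldl αu m₀ =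
      ((mooreStep αu αn)^[n] (m₀, true)).1 := by
  induction n with
  | zero => rfl
  | succ n ih =>
    rw [List.ofFn_succ', List.concat_eq_append, List.foldl_append]
    simp only [Fin.val_castSucc, Fin.val_last, List.foldl_cons, List.foldl_nil, ih,
      Function.iterate_succ_apply']
    rfl

theorem mooreStrat_hist_iterate_mooreStep (n : ℕ) :
    mooreStrat m₀ αu αn (hist (fun k => ((mooreStep αu αn)^[k] (m₀, true)).2) n) =
      ((mooreStep αu αn)^[n + 1] (m₀, true)).2 := by
  rw [hist_eq_ofFn_append, Function.iterate_succ_apply']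
  simp only [mooreStrat, List.getLast?_concat, List.dropLast_concat,
    foldl_ofFn_iterate_mooreStep]
  rfl

end Moore

theorem iterate_add_eq_of_iterate_eq {α : Type} {f : α → α} {x : α} {i j : ℕ}
    (h : f^[i] x = f^[j] x) (t : ℕ) : f^[t + i] x = f^[t + j] x := by
  rw [Function.iterate_add_apply, Function.iterate_add_apply, h]

theorem card_le_of_iterate_snd_eq_targetPlay {M : Type} [Fintype M] {U : ℕ}
    {f : M × Bool → M × Bool} {x : M × Bool} (h : ∀ n, (f^[n] x).2 = targetPlay U n) :
    U + 1 ≤ Fintype.card M := by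
  suffices hinj : Function.Injective fun j : Fin (U + 1) => (f^[2 * j] x).1 by
    simpa using Fintype.card_le_of_injective _ hinj
  refine Function.Injective.of_lt_imp_ne fun j k hjk hmem => ?_
  have hj : (j : ℕ) ≤ U := by omega
  have hk : (k : ℕ) ≤ U := by omega
  have hpos : f^[2 * j] x = f^[2 * k] x := Prod.ext hmem (by
    rw [h, h, targetPlay_two_mul hj, targetPlay_two_mul hk])
  have hshift := congrArg Prod.snd (iterate_add_eq_of_iterate_eq hpos (2 * U - 2 * j))
  rw [h, h, show 2 * U - 2 * j + 2 * j = 2 * U by omega,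
    show 2 * U - 2 * j + 2 * k = 2 * U + 2 * (k - j) by omega,
    targetPlay_two_mul_add_two_mul (by omega) (by omega), targetPlay_two_mul le_rfl] at hshift
  cases hshift

theorem LU_memory_lower_bound_general (U : ℕ) :
    (∀ π, IsPlay (gU U) true π →
      ((∀ n, 0 ≤ ELp (gU U) π n ∧ ELp (gU U) π n ≤ (U : ℤ)) ↔ π = targetPlay U)) ∧
    (∀ (M : Type) [Fintype M] (m₀ : M) (αu : M → Bool → M) (αn : M → Bool → Bool),
      Winning1 (gU U) true (mooreStrat m₀ αu αn) (LUObj (gU U) U 0) →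
      U + 1 ≤ Fintype.card M) := by
  refine ⟨fun π hπ => gU_energy_bounded_iff U hπ, fun M _ m₀ αu αn hwin => ?_⟩
  set π : ℕ → Bool := fun n => ((mooreStep αu αn)^[n] (m₀, true)).2
  have hsucc : ∀ n, π (n + 1) = mooreStrat m₀ αu αn (hist π n) := fun n =>
    (mooreStrat_hist_iterate_mooreStep m₀ αu αn n).symm
  have hplay : IsPlay (gU U) true π :=
    isPlay_of_succ_eq_strat hwin.1 (fun _ => trivial) rfl hsucc
  have hbounded := hwin.2 π hplay fun n _ => hsucc n
  simp only [LUObj, Nat.cast_zero, zero_add] at hbounded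
  have htarget : π = targetPlay U := (gU_energy_bounded_iff U hplay).1 hbounded
  exact card_le_of_iterate_snd_eq_targetPlay (congrFun htarget)

/-- Pseudo-polynomial memory lower bound for player 1 in bounded-energy games: in `G_U`,
(i) a play from `s` keeps the energy in `[0, U]` at all times iff it is the periodic play
`targetPlay U`, and (ii) every Moore-machine strategy of player 1 winning `LU(U, 0)` from `s`
has at least `U + 1` memory states. -/
theorem LU_memory_lower_bound (U : ℕ) (hU : 1 ≤ U) :
    (∀ π, IsPlay (gU U) true π →
      ((∀ n, 0 ≤ ELp (gU U) π n ∧ ELp (gU U) π n ≤ (U : ℤ)) ↔ π = targetPlay U)) ∧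
    (∀ (M : Type) [Fintype M] (m₀ : M) (αu : M → Bool → M) (αn : M → Bool → Bool),
      Winning1 (gU U) true (mooreStrat m₀ αu αn) (LUObj (gU U) U 0) →
      U + 1 ≤ Fintype.card M) :=
  LU_memory_lower_bound_general U

end
end
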